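/- Let $f: C \to D$ and $g: B \to C$ be chain maps of chain complexes over a ring, and suppose $f$ and $g$ admit chain-homotopy splittings $s_f f \simeq 1$, $s_g g \simeq 1$. Then $fg$ admits the splitting $s_g s_f$ up to chain homotopy ($s_g s_f (f g) \simeq 1$), and $H_*(\mathrm{cone}(fg)) \cong H_*(\mathrm{cone}(f)) \oplus H_*(\mathrm{cone}(g))$. -/

import Mathlib

open CategoryTheory CategoryTheory.Limits HomologicalComplex

namespace SplitConeAux

universe v u

/-- If `v` has a retraction `sv`, then `cokernel (u ≫ v) ≅ cokernel v ⊞ cokernel u`. -/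
noncomputable def cokerCompIso {A : Type*} [Category A] [Abelian A] {X Y Z : A}
    (u : X ⟶ Y) (v : Y ⟶ Z) (sv : Z ⟶ Y) (hv : v ≫ sv = 𝟙 Y) :
    cokernel (u ≫ v) ≅ cokernel v ⊞ cokernel u where
  hom := biprod.lift
    (cokernel.desc _ (cokernel.π v) (by rw [Category.assoc, cokernel.condition, comp_zero]))
    (cokernel.desc _ (sv ≫ cokernel.π u)
      (by rw [Category.assoc, reassoc_of% hv, cokernel.condition]))
  inv := biprod.desc
    (cokernel.desc v ((𝟙 Z - sv ≫ v) ≫ cokernel.π (u ≫ v))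
      (by simp [Preadditive.comp_sub, reassoc_of% hv]))
    (cokernel.desc u (v ≫ cokernel.π (u ≫ v))
      (by rw [← Category.assoc, cokernel.condition]))
  hom_inv_id := by
    ext
    simp [Preadditive.comp_sub, Preadditive.sub_comp, reassoc_of% hv]
  inv_hom_id := by
    ext
    · simp [Preadditive.comp_sub, Preadditive.sub_comp, reassoc_of% hv]
    · simp [Preadditive.comp_sub, Preadditive.sub_comp, reassoc_of% hv]
    · simp [Preadditive.comp_sub, Preadditive.sub_comp, reassoc_of% hv]
    · simp [Preadditive.comp_sub, Preadditive.sub_comp, reassoc_of% hv, hv]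

/-- If `φ` admits a retraction up to chain homotopy, then the homology of its mapping
cone is the cokernel of the induced map on homology. -/
theorem homologyCone_iso {R : Type u} [Ring R]
    {X Y : CochainComplex (ModuleCat.{v} R) ℤ} (φ : X ⟶ Y) (r : Y ⟶ X)
    (h : Homotopy (φ ≫ r) (𝟙 X)) (n : ℤ) :
    Nonempty ((CochainComplex.mappingCone φ).homology n ≅ cokernel (homologyMap φ n)) := by
  let Q := HomotopyCategory.quotient (ModuleCat R) (ComplexShape.up ℤ)
  let F := HomotopyCategory.homologyFunctor (ModuleCat R) (ComplexShape.up ℤ) 0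
  let T := CochainComplex.mappingCone.triangleh φ
  have hT := HomotopyCategory.mappingCone_triangleh_distinguished φ
  have hQ : Q.map φ ≫ Q.map r = 𝟙 _ := by
    rw [← Q.map_comp, ← Q.map_id]
    exact HomotopyCategory.eq_of_homotopy _ _ h
  have hmono : ∀ m : ℤ, Mono ((F.shift m).map (Q.map φ)) := fun m => by
    have hfac : (F.shift m).map (Q.map φ) ≫ (F.shift m).map (Q.map r) = 𝟙 _ := by
      rw [← Functor.map_comp, hQ, CategoryTheory.Functor.map_id]
    exact ⟨fun a b hab => by
      have := congrArg (· ≫ (F.shift m).map (Q.map r)) hab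
      simpa [hfac] using this⟩
  have hmor₁ : T.mor₁ = Q.map φ := rfl
  have hδ : F.homologySequenceδ T n (n+1) rfl = 0 := by
    have hc := F.homologySequenceδ_comp T hT n (n+1) rfl
    haveI := hmono (n+1)
    rw [hmor₁] at hc
    exact (cancel_mono ((F.shift (n+1)).map (Q.map φ))).1 (hc.trans zero_comp.symm)
  have hexact3 := F.homologySequence_exact₃ T hT n (n+1) rfl
  have hepi : Epi ((F.shift n).map T.mor₂) := hexact3.epi_f hδ
  have hexact2 := F.homologySequence_exact₂ T hT n
  haveI := hepi
  have hco := hexact2.gIsCokernel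
  have iso1 : cokernel ((F.shift n).map T.mor₁) ≅ (F.shift n).obj T.obj₃ :=
    IsColimit.coconePointUniqueUpToIso (cokernelIsCokernel _) hco
  let e := HomotopyCategory.homologyFunctorFactors (ModuleCat R) (ComplexShape.up ℤ) n
  have hnat : (F.shift n).map (Q.map φ) ≫ e.hom.app Y = e.hom.app X ≫ homologyMap φ n :=
    e.hom.naturality φ
  have iso2 : cokernel ((F.shift n).map T.mor₁) ≅ cokernel (homologyMap φ n) := by
    rw [hmor₁]
    exact cokernel.mapIso _ _ (e.app X) (e.app Y) hnat
  have iso3 : (F.shift n).obj T.obj₃ ≅ (CochainComplex.mappingCone φ).homology n :=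
    e.app (CochainComplex.mappingCone φ)
  exact ⟨iso3.symm ≪≫ iso1.symm ≪≫ iso2⟩

end SplitConeAux

theorem cone_of_composite_splits {R : Type*} [Ring R]
    (B C D : CochainComplex (ModuleCat R) ℤ)
    (f : C ⟶ D) (g : B ⟶ C) (sf : D ⟶ C) (sg : C ⟶ B)
    (hf : Homotopy (f ≫ sf) (𝟙 C)) (hg : Homotopy (g ≫ sg) (𝟙 B)) :
    Nonempty (Homotopy ((g ≫ f) ≫ (sf ≫ sg)) (𝟙 B)) ∧
    ∀ i : ℤ, Nonempty ((CochainComplex.mappingCone (g ≫ f)).homology i ≅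
      (CochainComplex.mappingCone f).homology i ⊞
        (CochainComplex.mappingCone g).homology i) := by
  have hgf : Homotopy ((g ≫ f) ≫ (sf ≫ sg)) (𝟙 B) :=
    (Homotopy.ofEq (by simp)).trans
      ((((hf.compRight sg).compLeft g).trans (Homotopy.ofEq (by simp))).trans hg)
  refine ⟨⟨hgf⟩, fun i => ?_⟩
  -- homology-level retraction of f
  have hfH : homologyMap f i ≫ homologyMap sf i = 𝟙 (C.homology i) := by
    rw [← homologyMap_comp, hf.homologyMap_eq i, homologyMap_id]
  obtain ⟨isoGF⟩ := SplitConeAux.homologyCone_iso (g ≫ f) (sf ≫ sg) hgf i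
  obtain ⟨isoF⟩ := SplitConeAux.homologyCone_iso f sf hf i
  obtain ⟨isoG⟩ := SplitConeAux.homologyCone_iso g sg hg i
  have hcomp : homologyMap (g ≫ f) i = homologyMap g i ≫ homologyMap f i :=
    homologyMap_comp g f i
  have isoC : cokernel (homologyMap (g ≫ f) i) ≅
      cokernel (homologyMap g i ≫ homologyMap f i) := by rw [hcomp]
  exact ⟨isoGF ≪≫ isoC ≪≫
    SplitConeAux.cokerCompIso (homologyMap g i) (homologyMap f i) (homologyMap sf i) hfH ≪≫
    biprod.mapIso isoF.symm isoG.symm⟩
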